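/- The constructions † ↦ Tr_† and Tr ↦ †_Tr are mutually inverse: for a guarded Conway category (C, ▷, †), the dagger induced by Tr_† equals †; and for a guarded traced cartesian category (C, ▷, Tr), the trace induced by †_Tr equals Tr. -/

import Mathlib

open CategoryTheory CategoryTheory.Limits

/-- The trace induced by a guarded dagger:
`Tr^X_{A,B}(f) = π_r ∘ f ∘ (p_X × id_A) ∘ ⟨(π_ℓ ∘ f)†, id_A⟩`. -/
noncomputable def TrD {C : Type*} [Category C] [HasFiniteProducts C]
    (F : C ⥤ C) (p : 𝟭 C ⟶ F)
    (dag : ∀ {X Y : C}, (F.obj X ⨯ Y ⟶ X) → (Y ⟶ X))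
    {X A B : C} (f : F.obj X ⨯ A ⟶ X ⨯ B) : A ⟶ B :=
  prod.lift (dag (f ≫ prod.fst)) (𝟙 A) ≫ prod.map (p.app X) (𝟙 A) ≫ f ≫ prod.snd

/-- The dagger induced by a guarded trace: `f^{†_Tr} = Tr^X_{A,X}⟨f, f⟩`. -/
noncomputable def dagT {C : Type*} [Category C] [HasFiniteProducts C]
    (F : C ⥤ C)
    (Tr : ∀ {X A B : C}, (F.obj X ⨯ A ⟶ X ⨯ B) → (A ⟶ B))
    {X A : C} (f : F.obj X ⨯ A ⟶ X) : A ⟶ X :=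
  Tr (prod.lift f f)

/-! The dagger direction is the fixpoint axiom unfolded. For the trace direction, naturality
reduces `Tr f` to `Tr ⟨π_ℓ ∘ f, id⟩`, and the key identity is
`Tr ⟨g, id⟩ = ⟨p ∘ Tr ⟨g, g⟩, id⟩`. Sliding the diagonal `X → X × X` into the loop and applying
vanishing II splits it into two nested traces; the inner one feeds back a wire that ignores
its feedback input, which yanking evaluates to `p`, and the outer one is `Tr ⟨g, g⟩` run
alongside its input, which is superposing. -/

section GuardedTrace

attribute [local simp] prod.lift_fst prod.lift_snd prod.lift_fst_assoc prod.lift_snd_assoc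
  prod.comp_lift_assoc

variable {C : Type*} [Category C] [HasFiniteProducts C] (F : C ⥤ C)
  (Tr : ∀ {X A B : C}, (F.obj X ⨯ A ⟶ X ⨯ B) → (A ⟶ B))

def TraceNaturalLeft : Prop :=
  ∀ {X A A' B : C} (f : F.obj X ⨯ A ⟶ X ⨯ B) (g : A' ⟶ A),
    Tr (prod.map (𝟙 (F.obj X)) g ≫ f) = g ≫ Tr f

def TraceNaturalRight : Prop :=
  ∀ {X A B B' : C} (f : F.obj X ⨯ A ⟶ X ⨯ B) (g : B ⟶ B'),
    Tr (f ≫ prod.map (𝟙 X) g) = Tr f ≫ g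

def TraceSliding : Prop :=
  ∀ {X X' A B : C} (f : F.obj X ⨯ A ⟶ X' ⨯ B) (g : X' ⟶ X),
    Tr (f ≫ prod.map g (𝟙 B)) = Tr (prod.map (F.map g) (𝟙 A) ≫ f)

def TraceVanishingTwo : Prop :=
  ∀ {X Y A B : C} (f : F.obj X ⨯ (F.obj Y ⨯ A) ⟶ X ⨯ (Y ⨯ B)),
    Tr (Tr f) =
      Tr (prod.map (prod.lift (F.map prod.fst) (F.map prod.snd)) (𝟙 A) ≫
        (prod.associator (F.obj X) (F.obj Y) A).hom ≫ f ≫ (prod.associator X Y B).inv)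

def TraceSuperposing : Prop :=
  ∀ {X A B D : C} (f : F.obj X ⨯ A ⟶ X ⨯ B),
    Tr ((prod.associator (F.obj X) A D).inv ≫ prod.map f (𝟙 D) ≫
      (prod.associator X B D).hom) = prod.map (Tr f) (𝟙 D)

def TraceYanking (p : 𝟭 C ⟶ F) : Prop :=
  ∀ X : C, Tr (prod.lift (prod.snd : F.obj X ⨯ X ⟶ X) prod.fst) = p.app X

variable {F Tr}

lemma trace_keep_input (natL : TraceNaturalLeft F @Tr) (superp : TraceSuperposing F @Tr)
    {X A B : C} (f : F.obj X ⨯ A ⟶ X ⨯ B) :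
    Tr (prod.lift (f ≫ prod.fst) (prod.lift (f ≫ prod.snd) prod.snd)) =
      prod.lift (Tr f) (𝟙 A) := by
  have h := natL ((prod.associator (F.obj X) A A).inv ≫ prod.map f (𝟙 A) ≫
    (prod.associator X B A).hom) (prod.lift (𝟙 A) (𝟙 A))
  rw [superp] at h
  convert h using 2 <;> ext <;> simp

lemma trace_lift_snd (p : 𝟭 C ⟶ F) (natL : TraceNaturalLeft F @Tr)
    (natR : TraceNaturalRight F @Tr) (superp : TraceSuperposing F @Tr)
    (yank : TraceYanking F @Tr p) {W B : C} (m : F.obj W ⨯ W ⟶ B) :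
    Tr (prod.lift prod.snd m) = prod.lift (p.app W) (𝟙 W) ≫ m := by
  have hid : Tr (prod.lift (prod.snd : F.obj W ⨯ W ⟶ W) (𝟙 _)) = prod.lift (p.app W) (𝟙 W) := by
    simpa [yank W] using
      trace_keep_input natL superp (prod.lift (prod.snd : F.obj W ⨯ W ⟶ W) prod.fst)
  rw [← hid, ← natR]
  congr 1
  ext <;> simp

lemma trace_lift_snd_comp (p : 𝟭 C ⟶ F) (natL : TraceNaturalLeft F @Tr)
    (natR : TraceNaturalRight F @Tr) (slide : TraceSliding F @Tr)
    (superp : TraceSuperposing F @Tr) (yank : TraceYanking F @Tr p)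
    {X A B : C} (k : A ⟶ X) (n : F.obj X ⨯ A ⟶ B) :
    Tr (prod.lift (prod.snd ≫ k) n) = prod.lift (k ≫ p.app X) (𝟙 A) ≫ n := by
  have hslide := slide (prod.lift prod.snd n) k
  have hnat : p.app A ≫ F.map k = k ≫ p.app X := (p.naturality k).symm
  calc Tr (prod.lift (prod.snd ≫ k) n)
      = Tr (prod.lift prod.snd (prod.map (F.map k) (𝟙 A) ≫ n)) := by
        convert hslide using 2 <;> ext <;> simp
    _ = prod.lift (k ≫ p.app X) (𝟙 A) ≫ n := by
        rw [trace_lift_snd p natL natR superp yank, prod.lift_map_assoc, hnat]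
        simp

lemma trace_lift_id (p : 𝟭 C ⟶ F) (natL : TraceNaturalLeft F @Tr)
    (natR : TraceNaturalRight F @Tr) (slide : TraceSliding F @Tr)
    (vanII : TraceVanishingTwo F @Tr) (superp : TraceSuperposing F @Tr)
    (yank : TraceYanking F @Tr p) {X A : C} (g : F.obj X ⨯ A ⟶ X) :
    Tr (prod.lift g (𝟙 _)) = prod.lift (Tr (prod.lift g g) ≫ p.app X) (𝟙 A) := by
  have hkeep : Tr (prod.lift g (prod.lift (g ≫ p.app X) prod.snd)) =
      prod.lift (Tr (prod.lift g g) ≫ p.app X) (𝟙 A) := by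
    have h := natR (prod.lift g (prod.lift g prod.snd)) (prod.map (p.app X) (𝟙 A))
    have hk := trace_keep_input natL superp (prod.lift g g)
    simp only [prod.lift_fst, prod.lift_snd] at hk
    rw [hk] at h
    convert h using 2 <;> ext <;> simp
  set nested : F.obj X ⨯ (F.obj X ⨯ A) ⟶ X ⨯ (X ⨯ (F.obj X ⨯ A)) :=
    prod.lift (prod.snd ≫ g) (prod.lift (prod.snd ≫ g) (prod.lift prod.fst (prod.snd ≫ prod.snd)))
  set body : F.obj (X ⨯ X) ⨯ A ⟶ X ⨯ (F.obj X ⨯ A) :=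
    prod.lift (prod.lift (prod.fst ≫ F.map prod.snd) prod.snd ≫ g)
      (prod.lift (prod.fst ≫ F.map prod.fst) prod.snd)
  have hinner : Tr nested = prod.lift g (prod.lift (g ≫ p.app X) prod.snd) := by
    rw [trace_lift_snd_comp p natL natR slide superp yank]
    ext <;> simp
  calc Tr (prod.lift g (𝟙 _))
      = Tr (prod.map (F.map (prod.lift (𝟙 X) (𝟙 X))) (𝟙 A) ≫ body) := by
        congr 1; ext <;> simp [body, ← F.map_comp]
    _ = Tr (body ≫ prod.map (prod.lift (𝟙 X) (𝟙 X)) (𝟙 _)) := (slide _ _).symm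
    _ = Tr (prod.map (prod.lift (F.map prod.fst) (F.map prod.snd)) (𝟙 A) ≫
          (prod.associator (F.obj X) (F.obj X) A).hom ≫ nested ≫
          (prod.associator X X (F.obj X ⨯ A)).inv) := by
        congr 1; ext <;> simp [body, nested]
    _ = Tr (Tr nested) := (vanII nested).symm
    _ = prod.lift (Tr (prod.lift g g) ≫ p.app X) (𝟙 A) := by rw [hinner, hkeep]

lemma TrD_dagT (p : 𝟭 C ⟶ F) (natL : TraceNaturalLeft F @Tr)
    (natR : TraceNaturalRight F @Tr) (slide : TraceSliding F @Tr)
    (vanII : TraceVanishingTwo F @Tr) (superp : TraceSuperposing F @Tr)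
    (yank : TraceYanking F @Tr p) {X A B : C} (f : F.obj X ⨯ A ⟶ X ⨯ B) :
    TrD F p (dagT F @Tr) f = Tr f :=
  calc TrD F p (dagT F @Tr) f = Tr (prod.lift (f ≫ prod.fst) (𝟙 _)) ≫ f ≫ prod.snd := by
        rw [trace_lift_id p natL natR slide vanII superp yank]
        simp [TrD, dagT, prod.lift_map_assoc]
    _ = Tr f := by
        rw [← natR]
        congr 1
        ext <;> simp

end GuardedTrace

lemma dagT_TrD {C : Type*} [Category C] [HasFiniteProducts C] {F : C ⥤ C} (p : 𝟭 C ⟶ F)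
    (dag : ∀ {X Y : C}, (F.obj X ⨯ Y ⟶ X) → (Y ⟶ X))
    (fix : ∀ {X Y : C} (f : F.obj X ⨯ Y ⟶ X),
      dag f = prod.lift (dag f) (𝟙 Y) ≫ prod.map (p.app X) (𝟙 Y) ≫ f)
    {X A : C} (f : F.obj X ⨯ A ⟶ X) :
    dagT F (TrD F p @dag) f = dag f := by
  simp only [dagT, TrD, prod.lift_fst, prod.lift_snd]
  exact (fix f).symm


/-- The constructions `† ↦ Tr_†` and `Tr ↦ †_Tr` are mutually inverse: for a guarded
Conway dagger `†`, the dagger induced by `Tr_†` is `†`; for a guarded trace `Tr`, the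
trace induced by `†_Tr` is `Tr`. -/
theorem stmt15 {C : Type*} [Category C] [HasFiniteProducts C]
    (F : C ⥤ C) (p : 𝟭 C ⟶ F) :
    (∀ dag : ∀ {X Y : C}, (F.obj X ⨯ Y ⟶ X) → (Y ⟶ X),
      (∀ {X Y : C} (f : F.obj X ⨯ Y ⟶ X),
        dag f = prod.lift (dag f) (𝟙 Y) ≫ prod.map (p.app X) (𝟙 Y) ≫ f) →
      (∀ {X Y Z : C} (f : F.obj X ⨯ Y ⟶ X) (h : Z ⟶ Y),
        h ≫ dag f = dag (prod.map (𝟙 (F.obj X)) h ≫ f)) →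
      (∀ {X Y Z : C} (f : F.obj X ⨯ Y ⟶ Z) (g : Z ⟶ X),
        dag (f ≫ g) = dag (prod.map (F.map g) (𝟙 Y) ≫ f) ≫ g) →
      (∀ {X Y : C} (f : F.obj X ⨯ (F.obj X ⨯ Y) ⟶ X),
        dag (dag f) =
          dag (prod.lift (prod.fst : F.obj X ⨯ Y ⟶ F.obj X) (𝟙 (F.obj X ⨯ Y)) ≫ f)) →
      ∀ {X A : C} (f : F.obj X ⨯ A ⟶ X),
        dagT F (TrD F p @dag) f = dag f) ∧
    (∀ Tr : ∀ {X A B : C}, (F.obj X ⨯ A ⟶ X ⨯ B) → (A ⟶ B),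
      (∀ {X A A' B : C} (f : F.obj X ⨯ A ⟶ X ⨯ B) (g : A' ⟶ A),
        Tr (prod.map (𝟙 (F.obj X)) g ≫ f) = g ≫ Tr f) →
      (∀ {X A B B' : C} (f : F.obj X ⨯ A ⟶ X ⨯ B) (g : B ⟶ B'),
        Tr (f ≫ prod.map (𝟙 X) g) = Tr f ≫ g) →
      (∀ {X X' A B : C} (f : F.obj X ⨯ A ⟶ X' ⨯ B) (g : X' ⟶ X),
        Tr (f ≫ prod.map g (𝟙 B)) = Tr (prod.map (F.map g) (𝟙 A) ≫ f)) →
      (∀ {A B : C} (f : F.obj (⊤_ C) ⨯ A ⟶ (⊤_ C) ⨯ B),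
        Tr f = prod.lift (terminal.from A ≫ p.app (⊤_ C)) (𝟙 A) ≫ f ≫ prod.snd) →
      (∀ {X Y A B : C} (f : F.obj X ⨯ (F.obj Y ⨯ A) ⟶ X ⨯ (Y ⨯ B)),
        Tr (Tr f) =
          Tr (prod.map (prod.lift (F.map prod.fst) (F.map prod.snd)) (𝟙 A) ≫
            (prod.associator (F.obj X) (F.obj Y) A).hom ≫ f ≫
            (prod.associator X Y B).inv)) →
      (∀ {X A B D : C} (f : F.obj X ⨯ A ⟶ X ⨯ B),
        Tr ((prod.associator (F.obj X) A D).inv ≫ prod.map f (𝟙 D) ≫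
            (prod.associator X B D).hom)
          = prod.map (Tr f) (𝟙 D)) →
      (∀ X : C,
        Tr (prod.lift (prod.snd : F.obj X ⨯ X ⟶ X) prod.fst) = p.app X) →
      ∀ {X A B : C} (f : F.obj X ⨯ A ⟶ X ⨯ B),
        TrD F p (dagT F @Tr) f = Tr f) :=
  ⟨fun dag fix _ _ _ _ _ f => dagT_TrD p dag fix f,
    fun _ natL natR slide _ vanII superp yank _ _ _ f =>
      TrD_dagT p natL natR slide vanII superp yank f⟩
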